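/- Suppose θ̂₂ ~ N(θ + b₂, s₂²) with s₂ > 0 and the bias satisfies the MSE bound b₂² ≤ s₁² − s₂² (with 0 < s₂ < s₁). Let z̃ > 0 be the critical value such that Φ((z̃ s₁ − √(s₁² − s₂²))/s₂) − Φ((−z̃ s₁ − √(s₁² − s₂²))/s₂) = 1 − α for some α ∈ (0,1). Then the coverage probability of the interval θ̂₂ ± z̃ s₁ is at least 1 − α for every b₂ with |b₂| ≤ √(s₁² − s₂²), and equals 1 − α exactly when b₂ = ±√(s₁² − s₂²). -/

import Mathlib

/-!
The interval `θ̂₂ ± c` covers `θ` exactly when the centred error `θ̂₂ - θ ~ N(b₂, s₂²)` lies in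
`[-c, c]`, which happens with probability `Φ((c - b₂)/s₂) - Φ((-c - b₂)/s₂)`. This is even in `b₂`,
and for `b₂ ≥ 0` its derivative `(φ((-c - b₂)/s₂) - φ((c - b₂)/s₂))/s₂` is nonpositive because the
normal density decreases in `|x|`. Hence the coverage is smallest at the extreme admissible biases
`±√(s₁² - s₂²)`, where the calibration of `z̃` makes it exactly `1 - α`.
-/

open MeasureTheory ProbabilityTheory Real Filter Set

/-- Standard normal CDF. -/
noncomputable def Phi (x : ℝ) : ℝ := ((gaussianReal 0 1) (Set.Iic x)).toReal

lemma continuous_gaussianPDFReal (μ : ℝ) (v : NNReal) : Continuous (gaussianPDFReal μ v) := by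
  unfold gaussianPDFReal
  fun_prop

lemma gaussianPDFReal_le_of_sq_le {μ : ℝ} {v : NNReal} {a b : ℝ}
    (h : (b - μ) ^ 2 ≤ (a - μ) ^ 2) :
    gaussianPDFReal μ v a ≤ gaussianPDFReal μ v b := by
  unfold gaussianPDFReal
  gcongr

lemma Phi_eq_integral (x : ℝ) : Phi x = ∫ t in Iic x, gaussianPDFReal 0 1 t := by
  rw [Phi, gaussianReal_apply_eq_integral 0 one_ne_zero, ENNReal.toReal_ofReal]
  exact integral_nonneg fun t => gaussianPDFReal_nonneg _ _ _

lemma Phi_sub_Phi (a b : ℝ) : Phi b - Phi a = ∫ t in a..b, gaussianPDFReal 0 1 t := by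
  rw [Phi_eq_integral, Phi_eq_integral, intervalIntegral.integral_Iic_sub_Iic
    (integrable_gaussianPDFReal 0 1).integrableOn (integrable_gaussianPDFReal 0 1).integrableOn]

lemma hasDerivAt_Phi (x : ℝ) : HasDerivAt Phi (gaussianPDFReal 0 1 x) x := by
  have hPhi : Phi = fun u => Phi 0 + ∫ t in (0 : ℝ)..u, gaussianPDFReal 0 1 t := by
    funext u
    rw [← Phi_sub_Phi]
    ring
  rw [hPhi]
  exact ((continuous_gaussianPDFReal 0 1).integral_hasStrictDerivAt 0 x).hasDerivAt.const_add _

lemma Phi_neg (x : ℝ) : Phi (-x) = 1 - Phi x := by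
  have := nullSingletonClass_gaussianReal (μ := 0) (v := 1) one_ne_zero
  have hsymm : (gaussianReal 0 1).map (fun x ↦ -x) = gaussianReal 0 1 := by
    rw [gaussianReal_map_neg, neg_zero]
  calc Phi (-x) = (gaussianReal 0 1).real (Ici x) := by
        rw [Phi, ← measureReal_def, ← hsymm,
          map_measureReal_apply measurable_neg measurableSet_Iic, hsymm, neg_preimage, neg_Iic, neg_neg]
    _ = 1 - (gaussianReal 0 1).real (Iio x) := by
        rw [← compl_Iio, probReal_compl_eq_one_sub measurableSet_Iio]
    _ = 1 - Phi x := by rw [measureReal_congr Iio_ae_eq_Iic, measureReal_def, Phi]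

lemma gaussianReal_Icc_toReal (m s l u : ℝ) (hs : 0 < s) (hlu : l ≤ u) :
    (gaussianReal m (s ^ 2).toNNReal (Icc l u)).toReal = Phi ((u - m) / s) - Phi ((l - m) / s) := by
  have hstd : gaussianReal m (s ^ 2).toNNReal = (gaussianReal 0 1).map (fun x => s * x + m) := by
    rw [show (fun x => s * x + m) = (· + m) ∘ (s * ·) from rfl,
      ← Measure.map_map (measurable_add_const m) (measurable_const_mul s),
      gaussianReal_map_const_mul, gaussianReal_map_add_const]
    congr
    · ring
    · ext; simp [sq_nonneg]
  have hpre : (fun x => s * x + m) ⁻¹' Icc l u = Icc ((l - m) / s) ((u - m) / s) := by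
    ext x
    simp only [mem_preimage, mem_Icc, div_le_iff₀ hs, le_div_iff₀ hs]
    constructor <;> rintro ⟨h1, h2⟩ <;> constructor <;> linarith
  rw [hstd, Measure.map_apply (by fun_prop) measurableSet_Icc, hpre, Phi_sub_Phi,
    gaussianReal_apply_eq_integral 0 one_ne_zero, ENNReal.toReal_ofReal,
    intervalIntegral.integral_of_le, integral_Icc_eq_integral_Ioc]
  · gcongr
  · exact integral_nonneg fun t => gaussianPDFReal_nonneg _ _ _

noncomputable def coverageProb (c s b : ℝ) : ℝ := Phi ((c - b) / s) - Phi ((-c - b) / s)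

lemma coverageProb_neg (c s b : ℝ) : coverageProb c s (-b) = coverageProb c s b := by
  rw [coverageProb, coverageProb, show (c - -b) / s = -((-c - b) / s) by ring,
    show (-c - -b) / s = -((c - b) / s) by ring, Phi_neg, Phi_neg]
  ring

lemma coverageProb_abs (c s b : ℝ) : coverageProb c s |b| = coverageProb c s b := by
  rcases abs_choice b with h | h <;> rw [h]
  exact coverageProb_neg c s b

lemma hasDerivAt_coverageProb (c s b : ℝ) :
    HasDerivAt (coverageProb c s)
      ((gaussianPDFReal 0 1 ((-c - b) / s) - gaussianPDFReal 0 1 ((c - b) / s)) / s) b := by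
  have hlin (a : ℝ) : HasDerivAt (fun b : ℝ => (a - b) / s) (-1 / s) b := by
    simpa using ((hasDerivAt_id b).const_sub a).div_const s
  exact (((hasDerivAt_Phi _).comp b (hlin c)).sub
    ((hasDerivAt_Phi _).comp b (hlin (-c)))).congr_deriv (by ring)

lemma coverageProb_antitoneOn {c s : ℝ} (hc : 0 ≤ c) (hs : 0 ≤ s) :
    AntitoneOn (coverageProb c s) (Ici 0) := by
  refine antitoneOn_of_hasDerivWithinAt_nonpos (convex_Ici 0)
    (fun b _ => (hasDerivAt_coverageProb c s b).continuousAt.continuousWithinAt)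
    (fun b _ => (hasDerivAt_coverageProb c s b).hasDerivWithinAt) fun b hb => ?_
  rw [interior_Ici, mem_Ioi] at hb
  have hpdf : gaussianPDFReal 0 1 ((-c - b) / s) ≤ gaussianPDFReal 0 1 ((c - b) / s) := by
    apply gaussianPDFReal_le_of_sq_le
    rw [sub_zero, sub_zero, div_pow, div_pow]
    exact div_le_div_of_nonneg_right (by nlinarith) (sq_nonneg s)
  exact div_nonpos_of_nonpos_of_nonneg (sub_nonpos.mpr hpdf) hs

lemma measureReal_symmetric_interval_eq_coverageProb {Ω : Type*} [MeasurableSpace Ω]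
    {P : Measure Ω} {X : Ω → ℝ} {θ b s c : ℝ} (hs : 0 < s) (hc : 0 ≤ c)
    (hX : P.map X = gaussianReal (θ + b) (s ^ 2).toNNReal) :
    (P {ω | X ω - c ≤ θ ∧ θ ≤ X ω + c}).toReal = coverageProb c s b := by
  have hXm : AEMeasurable X P := aemeasurable_of_map_neZero (by rw [hX]; infer_instance)
  have hset : {ω | X ω - c ≤ θ ∧ θ ≤ X ω + c} = X ⁻¹' Icc (θ - c) (θ + c) := by
    ext ω
    simp only [mem_ofPred_eq, mem_preimage, mem_Icc]
    constructor <;> rintro ⟨h1, h2⟩ <;> constructor <;> linarith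
  rw [hset, ← Measure.map_apply_of_aemeasurable hXm measurableSet_Icc, hX,
    gaussianReal_Icc_toReal _ _ _ _ hs (by linarith), coverageProb]
  congr 2 <;> ring

theorem stmt10_general {Ω : Type*} [MeasurableSpace Ω] (P : Measure Ω)
    (X : Ω → ℝ) (θ b₂ s₁ s₂ ztil α : ℝ)
    (hs₂ : 0 < s₂) (hs₁ : s₂ < s₁) (hz : 0 < ztil)
    (hb : |b₂| ≤ Real.sqrt (s₁ ^ 2 - s₂ ^ 2))
    (hcal : Phi ((ztil * s₁ - Real.sqrt (s₁ ^ 2 - s₂ ^ 2)) / s₂)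
          - Phi ((-(ztil * s₁) - Real.sqrt (s₁ ^ 2 - s₂ ^ 2)) / s₂) = 1 - α)
    (hX : Measure.map X P = gaussianReal (θ + b₂) (Real.toNNReal (s₂ ^ 2))) :
    (1 - α ≤ (P {ω | X ω - ztil * s₁ ≤ θ ∧ θ ≤ X ω + ztil * s₁}).toReal) ∧
    ((b₂ = Real.sqrt (s₁ ^ 2 - s₂ ^ 2) ∨ b₂ = -Real.sqrt (s₁ ^ 2 - s₂ ^ 2)) →
      (P {ω | X ω - ztil * s₁ ≤ θ ∧ θ ≤ X ω + ztil * s₁}).toReal = 1 - α) := by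
  have hc : 0 ≤ ztil * s₁ := mul_nonneg hz.le (hs₂.trans hs₁).le
  change coverageProb (ztil * s₁) s₂ √(s₁ ^ 2 - s₂ ^ 2) = 1 - α at hcal
  rw [measureReal_symmetric_interval_eq_coverageProb hs₂ hc hX, ← hcal]
  refine ⟨?_, ?_⟩
  · rw [← coverageProb_abs _ _ b₂]
    exact coverageProb_antitoneOn hc hs₂.le (abs_nonneg b₂) (sqrt_nonneg _) hb
  · rintro (rfl | rfl)
    · rfl
    · exact coverageProb_neg _ _ _

theorem stmt10 {Ω : Type*} [MeasurableSpace Ω] (P : Measure Ω) [IsProbabilityMeasure P]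
    (X : Ω → ℝ) (θ b₂ s₁ s₂ ztil α : ℝ)
    (hs₂ : 0 < s₂) (hs₁ : s₂ < s₁) (hz : 0 < ztil) (hα : α ∈ Set.Ioo (0 : ℝ) 1)
    (hb : |b₂| ≤ Real.sqrt (s₁ ^ 2 - s₂ ^ 2))
    (hcal : Phi ((ztil * s₁ - Real.sqrt (s₁ ^ 2 - s₂ ^ 2)) / s₂)
          - Phi ((-(ztil * s₁) - Real.sqrt (s₁ ^ 2 - s₂ ^ 2)) / s₂) = 1 - α)
    (hX : Measure.map X P = gaussianReal (θ + b₂) (Real.toNNReal (s₂ ^ 2))) :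
    (1 - α ≤ (P {ω | X ω - ztil * s₁ ≤ θ ∧ θ ≤ X ω + ztil * s₁}).toReal) ∧
    ((b₂ = Real.sqrt (s₁ ^ 2 - s₂ ^ 2) ∨ b₂ = -Real.sqrt (s₁ ^ 2 - s₂ ^ 2)) →
      (P {ω | X ω - ztil * s₁ ≤ θ ∧ θ ≤ X ω + ztil * s₁}).toReal = 1 - α) :=
  stmt10_general P X θ b₂ s₁ s₂ ztil α hs₂ hs₁ hz hb hcal hX
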